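/- arXiv:2104.11923 — 4 statements merged into one kernel-verified Lean document; each statement's English description precedes it below -/
import Mathlib

section
/- Let ε ≥ 0 and let ρ₀, ρ₁ be positive definite density matrices in M_n(ℂ). For every HJB_ε subsolution A and every pair (ρ,V) ∈ CE_ε(ρ₀,ρ₁), one has τ(A(1)ρ₁ − A(0)ρ₀) ≤ ½ ∫₀¹ ⟨V(t), [ρ(t)]_ω⁻¹ V(t)⟩ dt. Consequently sup_{A ∈ HJB_ε} τ(A(1)ρ₁ − A(0)ρ₀) ≤ ½·W_ε²(ρ₀,ρ₁). -/
open MeasureTheory Matrix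
open scoped ENNReal Classical ComplexOrder

/-- Normalized trace `τ(A) = Tr(A)/n` on `M_n(ℂ)`. -/
noncomputable def tau {N : Type*} [Fintype N] (A : Matrix N N ℂ) : ℂ :=
  A.trace / (Fintype.card N)

/-- GNS inner product `⟨A,B⟩ = τ(A* B)`, conjugate-linear in the first argument. -/
noncomputable def gns {N : Type*} [Fintype N] (A B : Matrix N N ℂ) : ℂ := tau (Aᴴ * B)

/-- Fractional power `X^s` of a positive semidefinite matrix via functional calculus
(junk value `0` if `X` is not hermitian). -/
noncomputable def mpow {N : Type*} [Fintype N] [DecidableEq N] (X : Matrix N N ℂ) (s : ℝ) :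
    Matrix N N ℂ :=
  if hX : X.IsHermitian then
    (Matrix.IsHermitian.eigenvectorUnitary hX : Matrix N N ℂ) *
      Matrix.diagonal (fun i => ((hX.eigenvalues i ^ s : ℝ) : ℂ)) *
      (star (Matrix.IsHermitian.eigenvectorUnitary hX : Matrix N N ℂ))
  else 0

/-- The operator `[X]_α(A) = ∫₀¹ e^{α(s-1/2)} X^s A X^{1-s} ds` on `M_n(ℂ)`. -/
noncomputable def sandwich {N : Type*} [Fintype N] [DecidableEq N] (X : Matrix N N ℂ) (α : ℝ)
    (A : Matrix N N ℂ) : Matrix N N ℂ :=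
  Matrix.of fun i k =>
    ∫ s in (0:ℝ)..1, Real.exp (α * (s - 1/2)) • ((mpow X s * A * mpow X (1 - s)) i k)

section H

variable {N : Type*} [Fintype N] [DecidableEq N] {J : Type*} [Fintype J]

/-- Inner product on `H = ⊕_{j ∈ J} M_n(ℂ)`. -/
noncomputable def gnsH (V W : J → Matrix N N ℂ) : ℂ := ∑ j, gns (V j) (W j)

/-- The operator `[ρ]_ω = ⊕_j [ρ]_{ω_j}` on `H`. -/
noncomputable def opOmega (ω : J → ℝ) (ρ : Matrix N N ℂ) (W : J → Matrix N N ℂ) :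
    J → Matrix N N ℂ :=
  fun j => sandwich ρ (ω j) (W j)

/-- Extended value `⟨V, K⁻¹ V⟩ ∈ [0,∞]`: equals `⟨W, K W⟩` if `V = K W` with
`W ⊥ ker K`, and `∞` if `V ∉ ran K`. -/
noncomputable def invQuadH (K : (J → Matrix N N ℂ) → (J → Matrix N N ℂ))
    (V : J → Matrix N N ℂ) : ℝ≥0∞ :=
  if h : ∃ W, K W = V ∧ ∀ U, K U = 0 → gnsH W U = 0
  then ENNReal.ofReal (gnsH h.choose (K h.choose)).re
  else ⊤

/-- The partial derivative `∂_j A = [V_j, A]`; `gradD V A = ∇A`. -/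
noncomputable def gradD (Vf : J → Matrix N N ℂ) (A : Matrix N N ℂ) : J → Matrix N N ℂ :=
  fun j => Vf j * A - A * Vf j

/-- The Lindblad generator `L(A) = ∑_j (e^{-ω_j/2} V_j^*[A,V_j] - e^{ω_j/2}[A,V_j]V_j^*)`. -/
noncomputable def genL (Vf : J → Matrix N N ℂ) (ω : J → ℝ) (A : Matrix N N ℂ) :
    Matrix N N ℂ :=
  ∑ j, (Real.exp (-ω j / 2) • ((Vf j)ᴴ * (A * Vf j - Vf j * A)) -
        Real.exp (ω j / 2) • ((A * Vf j - Vf j * A) * (Vf j)ᴴ))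

/-- Membership in `CE_ε(ρ₀,ρ₁)`: `ρ` is a C¹ curve of invertible density matrices joining
`ρ₀` to `ρ₁`, `Vc` is continuous, and the continuity equation
`ρ'(t) + div Vc(t) = ε L†ρ(t)` holds on `[0,1]`. -/
def IsCE (dvg : (J → Matrix N N ℂ) → Matrix N N ℂ) (Ldag : Matrix N N ℂ → Matrix N N ℂ)
    (ε : ℝ) (ρ₀ ρ₁ : Matrix N N ℂ) (ρ : ℝ → Matrix N N ℂ) (Vc : ℝ → J → Matrix N N ℂ) :
    Prop :=
  ρ 0 = ρ₀ ∧ ρ 1 = ρ₁ ∧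
  (∀ t ∈ Set.Icc (0:ℝ) 1, (ρ t).PosDef ∧ tau (ρ t) = 1) ∧
  (∀ j i k, ContinuousOn (fun t => Vc t j i k) (Set.Icc (0:ℝ) 1)) ∧
  ∃ ρ' : ℝ → Matrix N N ℂ,
    (∀ t ∈ Set.Icc (0:ℝ) 1, ∀ i k, HasDerivAt (fun s => ρ s i k) (ρ' t i k) t) ∧
    (∀ i k, ContinuousOn (fun t => ρ' t i k) (Set.Icc (0:ℝ) 1)) ∧
    (∀ t ∈ Set.Icc (0:ℝ) 1, ρ' t + dvg (Vc t) = ε • Ldag (ρ t))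

/-- The squared entropic transport distance `W_ε²(ρ₀,ρ₁)`. -/
noncomputable def Wsq (ω : J → ℝ) (dvg : (J → Matrix N N ℂ) → Matrix N N ℂ)
    (Ldag : Matrix N N ℂ → Matrix N N ℂ) (ε : ℝ) (ρ₀ ρ₁ : Matrix N N ℂ) : ℝ≥0∞ :=
  ⨅ (ρ : ℝ → Matrix N N ℂ) (Vc : ℝ → J → Matrix N N ℂ)
    (_ : IsCE dvg Ldag ε ρ₀ ρ₁ ρ Vc),
      ∫⁻ t in Set.Icc (0:ℝ) 1, invQuadH (opOmega ω (ρ t)) (Vc t)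

/-- Hamilton–Jacobi–Bellmann subsolutions: `A` is a C¹ curve of hermitian matrices with
`τ((Ȧ(t) + ε L A(t))ρ) + ½⟨∇A(t), [ρ]_ω ∇A(t)⟩ ≤ 0` for all `t ∈ [0,1]` and all
density matrices `ρ`.  (`A'` records the derivative of `A`.) -/
noncomputable def IsHJB (Vf : J → Matrix N N ℂ) (ω : J → ℝ) (ε : ℝ)
    (A A' : ℝ → Matrix N N ℂ) : Prop :=
  (∀ t ∈ Set.Icc (0:ℝ) 1, (A t).IsHermitian) ∧
  (∀ t ∈ Set.Icc (0:ℝ) 1, ∀ i k, HasDerivAt (fun s => A s i k) (A' t i k) t) ∧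
  (∀ i k, ContinuousOn (fun t => A' t i k) (Set.Icc (0:ℝ) 1)) ∧
  ∀ t ∈ Set.Icc (0:ℝ) 1, ∀ ρ : Matrix N N ℂ, ρ.PosSemidef → tau ρ = 1 →
    (tau ((A' t + ε • genL Vf ω (A t)) * ρ)).re
      + (1/2) * (gnsH (gradD Vf (A t)) (opOmega ω ρ (gradD Vf (A t)))).re ≤ 0

end H

/-!
Along `(ρ, V) ∈ CE_ε`, differentiate `t ↦ τ(A(t) ρ(t))`. The continuity equation and the
dualities `⟨div V, B⟩ = -⟨V, ∇B⟩`, `⟨L†ρ, B⟩ = ⟨ρ, L B⟩` turn the derivative into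
`τ((A' + ε L A) ρ) + ⟨V, ∇A⟩`.
Each `⟨·, [ρ]_α ·⟩` is a positive average over `s` of the positive hermitian forms
`(B, C) ↦ τ(B* ρ^s C ρ^{1-s})`, so for `V = [ρ]_ω W` Young's inequality gives
`⟨V, ∇A⟩ ≤ ½⟨W, [ρ]_ω W⟩ + ½⟨∇A, [ρ]_ω ∇A⟩`; the HJB inequality absorbs all terms except
`½⟨V, [ρ]_ω⁻¹ V⟩`. Integrating over `[0,1]` gives the first claim, and the second follows by
taking the supremum over `A` and the infimum over `(ρ, V)`.
-/

section Trace

variable {N : Type*} [Fintype N]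

lemma tau_add (A B : Matrix N N ℂ) : tau (A + B) = tau A + tau B := by
  simp [tau, add_div]

lemma tau_sub (A B : Matrix N N ℂ) : tau (A - B) = tau A - tau B := by
  simp [tau, sub_div]

lemma tau_smul (r : ℝ) (A : Matrix N N ℂ) : tau (r • A) = r • tau A := by
  simp [tau, Complex.real_smul, mul_div_assoc]

lemma tau_mul_comm (A B : Matrix N N ℂ) : tau (A * B) = tau (B * A) := by
  rw [tau, tau, trace_mul_comm]

lemma tau_conjTranspose (A : Matrix N N ℂ) : tau Aᴴ = starRingEnd ℂ (tau A) := by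
  simp [tau, trace_conjTranspose, map_div₀]

lemma continuous_tau : Continuous (tau : Matrix N N ℂ → ℂ) :=
  continuous_id.matrix_trace.div_const _

lemma re_tau_conjTranspose_mul_self_nonneg (M : Matrix N N ℂ) : 0 ≤ (tau (Mᴴ * M)).re := by
  rw [tau, Complex.div_natCast_re]
  exact div_nonneg (Complex.nonneg_iff.1 (posSemidef_conjTranspose_mul_self M).trace_nonneg).1
    (Nat.cast_nonneg _)

lemma starRingEnd_gns (A B : Matrix N N ℂ) : starRingEnd ℂ (gns A B) = gns B A := by
  rw [gns, gns, ← tau_conjTranspose, conjTranspose_mul, conjTranspose_conjTranspose]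

lemma starRingEnd_gns_mul_mul {P Q : Matrix N N ℂ} (hP : P.IsHermitian) (hQ : Q.IsHermitian)
    (A B : Matrix N N ℂ) : starRingEnd ℂ (gns A (P * B * Q)) = gns B (P * A * Q) := by
  rw [starRingEnd_gns, gns, gns, conjTranspose_mul, conjTranspose_mul, hP.eq, hQ.eq,
    Matrix.mul_assoc, Matrix.mul_assoc, tau_mul_comm]
  simp only [Matrix.mul_assoc]

lemma re_tau_mul_of_isHermitian {A : Matrix N N ℂ} (hA : A.IsHermitian) (M : Matrix N N ℂ) :
    (tau (A * M)).re = (gns M A).re := by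
  rw [← starRingEnd_gns, Complex.conj_re, gns, hA.eq]

lemma gns_sub_left (A B C : Matrix N N ℂ) : gns (A - B) C = gns A C - gns B C := by
  simp [gns, Matrix.sub_mul, tau_sub]

lemma gns_sub_right (A B C : Matrix N N ℂ) : gns A (B - C) = gns A B - gns A C := by
  simp [gns, Matrix.mul_sub, tau_sub]

lemma tau_mul_intervalIntegral_entrywise {f : ℝ → Matrix N N ℂ} (hf : Continuous f)
    (C : Matrix N N ℂ) (a b : ℝ) :
    tau (C * Matrix.of fun i k => ∫ s in a..b, f s i k) = ∫ s in a..b, tau (C * f s) := by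
  have hc : ∀ i k, Continuous fun s => C i k * f s k i :=
    fun i k => continuous_const.mul (hf.matrix_elem k i)
  simp only [tau, trace, diag, mul_apply, of_apply, intervalIntegral.integral_div]
  congr 1
  rw [intervalIntegral.integral_finsetSum (f := fun i s => ∑ k, C i k * f s k i)
    fun i _ => (continuous_finsetSum _ fun k _ => hc i k).intervalIntegrable a b]
  refine Finset.sum_congr rfl fun i _ => ?_
  rw [intervalIntegral.integral_finsetSum fun k _ => (hc i k).intervalIntegrable a b]
  simp only [intervalIntegral.integral_const_mul]

lemma re_gnsH_comm {J : Type*} [Fintype J] (V W : J → Matrix N N ℂ) :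
    (gnsH V W).re = (gnsH W V).re := by
  simp only [gnsH, Complex.re_sum, ← starRingEnd_gns (V _), Complex.conj_re]

end Trace

section Mpow

variable {N : Type*} [Fintype N] [DecidableEq N]

lemma isHermitian_mpow (X : Matrix N N ℂ) (s : ℝ) : (mpow X s).IsHermitian := by
  unfold mpow
  split_ifs with hX
  · rw [star_eq_conjTranspose]
    exact isHermitian_mul_mul_conjTranspose _ <| isHermitian_diagonal_of_self_adjoint _ <| by
      ext i; simp
  · exact isHermitian_zero

lemma mpow_add {X : Matrix N N ℂ} (hX : X.PosDef) (a b : ℝ) :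
    mpow X (a + b) = mpow X a * mpow X b := by
  simp only [mpow, dif_pos hX.1]
  set U := (hX.1.eigenvectorUnitary : Matrix N N ℂ)
  have hU : star U * U = 1 := Matrix.mem_unitaryGroup_iff'.mp hX.1.eigenvectorUnitary.2
  rw [show ∀ D D' : Matrix N N ℂ,
      U * D * star U * (U * D' * star U) = U * (D * (star U * U) * D') * star U by
    simp only [Matrix.mul_assoc, implies_true], hU, Matrix.mul_one, diagonal_mul_diagonal]
  simp only [← Complex.ofReal_mul, ← Real.rpow_add (hX.eigenvalues_pos _)]

lemma continuous_mpow {X : Matrix N N ℂ} (hX : X.PosDef) : Continuous (mpow X) := by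
  unfold mpow
  simp only [dif_pos hX.1]
  have hD : Continuous fun s : ℝ => diagonal fun i => ((hX.1.eigenvalues i ^ s : ℝ) : ℂ) :=
    Continuous.matrix_diagonal <| continuous_pi fun i =>
      Complex.continuous_ofReal.comp (Real.continuous_const_rpow (hX.eigenvalues_pos i).ne')
  exact (continuous_const.mul hD).mul continuous_const

end Mpow

section Sandwich

variable {N : Type*} [Fintype N] [DecidableEq N]

lemma continuous_mpow_mul_mpow {X : Matrix N N ℂ} (hX : X.PosDef) (B : Matrix N N ℂ) :
    Continuous fun s => mpow X s * B * mpow X (1 - s) :=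
  ((continuous_mpow hX).mul continuous_const).mul <|
    (continuous_mpow hX).comp (continuous_const.sub continuous_id)

lemma continuous_gns_mpow_mul_mpow {X : Matrix N N ℂ} (hX : X.PosDef) (A B : Matrix N N ℂ) :
    Continuous fun s => gns A (mpow X s * B * mpow X (1 - s)) :=
  continuous_tau.comp <| continuous_const.mul <| continuous_mpow_mul_mpow hX B

lemma re_gns_sandwich {X : Matrix N N ℂ} (hX : X.PosDef) (α : ℝ) (A B : Matrix N N ℂ) :
    (gns A (sandwich X α B)).re =
      ∫ s in (0:ℝ)..1, Real.exp (α * (s - 1/2)) * (gns A (mpow X s * B * mpow X (1 - s))).re := by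
  have hexp : Continuous fun s : ℝ => Real.exp (α * (s - 1/2)) := by fun_prop
  have hf : Continuous fun s => Real.exp (α * (s - 1/2)) • (mpow X s * B * mpow X (1 - s)) :=
    hexp.smul (continuous_mpow_mul_mpow hX B)
  have hsw : gns A (sandwich X α B) =
      ∫ s in (0:ℝ)..1, Real.exp (α * (s - 1/2)) • gns A (mpow X s * B * mpow X (1 - s)) := by
    rw [gns, sandwich]
    simpa only [Matrix.smul_apply, Matrix.mul_smul, tau_smul, gns] using
      tau_mul_intervalIntegral_entrywise hf Aᴴ 0 1
  have hint : IntervalIntegrable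
      (fun s => Real.exp (α * (s - 1/2)) • gns A (mpow X s * B * mpow X (1 - s))) volume 0 1 :=
    (hexp.smul (continuous_gns_mpow_mul_mpow hX A B)).intervalIntegrable 0 1
  rw [hsw, ← Complex.reCLM_apply, ← Complex.reCLM.intervalIntegral_comp_comm hint]
  simp only [Complex.reCLM_apply, Complex.smul_re, smul_eq_mul]

end Sandwich

section Young

variable {N : Type*} [Fintype N] [DecidableEq N]

lemma re_gns_mpow_mul_self_mul_mpow_nonneg {X : Matrix N N ℂ} (hX : X.PosDef) (s : ℝ)
    (A : Matrix N N ℂ) : 0 ≤ (gns A (mpow X s * A * mpow X (1 - s))).re := by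
  set p := mpow X (s / 2)
  set q := mpow X ((1 - s) / 2)
  have hs : mpow X s = p * p := by rw [← mpow_add hX, add_halves]
  have h1s : mpow X (1 - s) = q * q := by rw [← mpow_add hX, add_halves]
  have hp : pᴴ = p := (isHermitian_mpow X _).eq
  have hq : qᴴ = q := (isHermitian_mpow X _).eq
  calc 0 ≤ (tau ((p * A * q)ᴴ * (p * A * q))).re := re_tau_conjTranspose_mul_self_nonneg _
    _ = (tau (q * (Aᴴ * (p * p * A * q)))).re := by
      rw [conjTranspose_mul, conjTranspose_mul, hp, hq]
      simp only [Matrix.mul_assoc]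
    _ = (gns A (mpow X s * A * mpow X (1 - s))).re := by
      rw [tau_mul_comm, gns, hs, h1s]
      simp only [Matrix.mul_assoc]

lemma two_mul_re_gns_mpow_mul_mpow_le {X : Matrix N N ℂ} (hX : X.PosDef) (s : ℝ)
    (A B : Matrix N N ℂ) :
    2 * (gns A (mpow X s * B * mpow X (1 - s))).re ≤
      (gns A (mpow X s * A * mpow X (1 - s))).re + (gns B (mpow X s * B * mpow X (1 - s))).re := by
  have hpos := re_gns_mpow_mul_self_mul_mpow_nonneg hX s (A - B)
  have hsymm := congrArg Complex.re <|
    starRingEnd_gns_mul_mul (isHermitian_mpow X s) (isHermitian_mpow X (1 - s)) A B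
  rw [Complex.conj_re] at hsymm
  simp only [Matrix.mul_sub, Matrix.sub_mul, gns_sub_left, gns_sub_right, Complex.sub_re] at hpos
  linarith

lemma two_mul_re_gns_sandwich_le {X : Matrix N N ℂ} (hX : X.PosDef) (α : ℝ)
    (A B : Matrix N N ℂ) :
    2 * (gns A (sandwich X α B)).re ≤
      (gns A (sandwich X α A)).re + (gns B (sandwich X α B)).re := by
  have hint : ∀ C D : Matrix N N ℂ, IntervalIntegrable
      (fun s => Real.exp (α * (s - 1/2)) * (gns C (mpow X s * D * mpow X (1 - s))).re) volume 0 1 :=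
    fun C D => ((Real.continuous_exp.comp (by fun_prop)).mul
      (Complex.continuous_re.comp (continuous_gns_mpow_mul_mpow hX C D))).intervalIntegrable 0 1
  rw [re_gns_sandwich hX, re_gns_sandwich hX, re_gns_sandwich hX,
    ← intervalIntegral.integral_const_mul, ← intervalIntegral.integral_add (hint A A) (hint B B)]
  refine intervalIntegral.integral_mono_on zero_le_one ((hint A B).const_mul 2)
    ((hint A A).add (hint B B)) fun s _ => ?_
  have := mul_le_mul_of_nonneg_left (two_mul_re_gns_mpow_mul_mpow_le hX s A B)
    (Real.exp_pos (α * (s - 1/2))).le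
  linarith

lemma two_mul_re_gnsH_opOmega_le {J : Type*} [Fintype J] {ρ : Matrix N N ℂ} (hρ : ρ.PosDef)
    (ω : J → ℝ) (X W : J → Matrix N N ℂ) :
    2 * (gnsH X (opOmega ω ρ W)).re ≤
      (gnsH X (opOmega ω ρ X)).re + (gnsH W (opOmega ω ρ W)).re := by
  simp only [gnsH, opOmega, Complex.re_sum, Finset.mul_sum, ← Finset.sum_add_distrib]
  exact Finset.sum_le_sum fun j _ => two_mul_re_gns_sandwich_le hρ (ω j) (X j) (W j)

lemma ofReal_re_gnsH_sub_le_invQuadH {J : Type*} [Fintype J] {ρ : Matrix N N ℂ} (hρ : ρ.PosDef)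
    (ω : J → ℝ) (V X : J → Matrix N N ℂ) :
    ENNReal.ofReal ((gnsH V X).re - (gnsH X (opOmega ω ρ X)).re / 2) ≤
      invQuadH (opOmega ω ρ) V / 2 := by
  unfold invQuadH
  split_ifs with h
  · obtain ⟨hW, -⟩ := h.choose_spec
    have hVX : (gnsH V X).re = (gnsH X (opOmega ω ρ h.choose)).re := by
      rw [re_gnsH_comm, hW]
    rw [← ENNReal.ofReal_ofNat 2, ← ENNReal.ofReal_div_of_pos two_pos]
    refine ENNReal.ofReal_le_ofReal ?_
    linarith [two_mul_re_gnsH_opOmega_le hρ ω X h.choose]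
  · rw [ENNReal.top_div_of_ne_top ENNReal.ofNat_ne_top]
    exact le_top

end Young

lemma hasDerivAt_re_tau_mul {N : Type*} [Fintype N] {A B : ℝ → Matrix N N ℂ}
    {A' B' : Matrix N N ℂ} {t : ℝ} (hA : ∀ i k, HasDerivAt (fun s => A s i k) (A' i k) t)
    (hB : ∀ i k, HasDerivAt (fun s => B s i k) (B' i k) t) :
    HasDerivAt (fun s => (tau (A s * B s)).re) (tau (A' * B t + A t * B')).re t := by
  have h : HasDerivAt (fun s => tau (A s * B s)) (tau (A' * B t + A t * B')) t := by
    simp only [tau, trace, diag, mul_apply, Matrix.add_apply, ← Finset.sum_add_distrib]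
    exact (HasDerivAt.fun_sum fun i _ => HasDerivAt.fun_sum fun k _ =>
      (hA i k).fun_mul (hB k i)).div_const _
  exact Complex.reCLM.hasFDerivAt.comp_hasDerivAt t h

lemma ofReal_integral_le_lintegral_ofReal {α : Type*} [MeasurableSpace α] {μ : Measure α}
    {f : α → ℝ} (hf : Integrable f μ) :
    ENNReal.ofReal (∫ x, f x ∂μ) ≤ ∫⁻ x, ENNReal.ofReal (f x) ∂μ := by
  rw [integral_eq_lintegral_pos_part_sub_lintegral_neg_part hf]
  exact (ENNReal.ofReal_le_ofReal (sub_le_self _ ENNReal.toReal_nonneg)).trans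
    ENNReal.ofReal_toReal_le

lemma ofReal_sub_le_setLIntegral_of_hasDerivAt {f f' : ℝ → ℝ} {g : ℝ → ℝ≥0∞} {a b : ℝ}
    (hab : a ≤ b) (hf : ∀ t ∈ Set.Icc a b, HasDerivAt f (f' t) t)
    (hf' : ContinuousOn f' (Set.Icc a b)) (hg : ∀ t ∈ Set.Icc a b, ENNReal.ofReal (f' t) ≤ g t) :
    ENNReal.ofReal (f b - f a) ≤ ∫⁻ t in Set.Icc a b, g t := by
  rw [← intervalIntegral.integral_eq_sub_of_hasDerivAt
    (fun t ht => hf t (Set.uIcc_of_le hab ▸ ht)) (hf'.intervalIntegrable_of_Icc hab),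
    intervalIntegral.integral_of_le hab, ← integral_Icc_eq_integral_Ioc]
  exact (ofReal_integral_le_lintegral_ofReal (hf'.integrableOn_Icc)).trans
    (setLIntegral_mono' measurableSet_Icc hg)

section Duality

variable {N : Type*} [Fintype N] {J : Type*} [Fintype J]
  {Vf : J → Matrix N N ℂ} {ω : J → ℝ} {dvg : (J → Matrix N N ℂ) → Matrix N N ℂ}
  {Ldag : Matrix N N ℂ → Matrix N N ℂ}

lemma re_tau_mul_deriv_eq
    (hdvg : ∀ W B, gns (dvg W) B = -∑ j, gns (W j) (Vf j * B - B * Vf j))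
    (hLdag : ∀ ρ B, gns (Ldag ρ) B = gns ρ (genL Vf ω B))
    {ε : ℝ} {A ρ ρ' : Matrix N N ℂ} {V : J → Matrix N N ℂ} (hA : A.IsHermitian)
    (hρ : ρ.IsHermitian) (hce : ρ' + dvg V = ε • Ldag ρ) :
    (tau (A * ρ')).re = ε * (tau (genL Vf ω A * ρ)).re + (gnsH V (gradD Vf A)).re := by
  rw [eq_sub_of_add_eq hce, Matrix.mul_sub, Matrix.mul_smul, tau_sub, tau_smul, Complex.sub_re,
    Complex.smul_re, smul_eq_mul, re_tau_mul_of_isHermitian hA, re_tau_mul_of_isHermitian hA,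
    hLdag, hdvg, gns, hρ.eq, tau_mul_comm, Complex.neg_re, sub_neg_eq_add]
  rfl

variable [DecidableEq N]

lemma ofReal_re_tau_deriv_le
    (hdvg : ∀ W B, gns (dvg W) B = -∑ j, gns (W j) (Vf j * B - B * Vf j))
    (hLdag : ∀ ρ B, gns (Ldag ρ) B = gns ρ (genL Vf ω B))
    {ε : ℝ} {A A' ρ ρ' : Matrix N N ℂ} {V : J → Matrix N N ℂ} (hA : A.IsHermitian)
    (hρ : ρ.PosDef) (hce : ρ' + dvg V = ε • Ldag ρ)
    (hHJB : (tau ((A' + ε • genL Vf ω A) * ρ)).re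
      + (1/2) * (gnsH (gradD Vf A) (opOmega ω ρ (gradD Vf A))).re ≤ 0) :
    ENNReal.ofReal (tau (A' * ρ + A * ρ')).re ≤ invQuadH (opOmega ω ρ) V / 2 := by
  refine le_trans (ENNReal.ofReal_le_ofReal ?_) (ofReal_re_gnsH_sub_le_invQuadH hρ ω V (gradD Vf A))
  rw [Matrix.add_mul, Matrix.smul_mul, tau_add, tau_smul, Complex.add_re, Complex.smul_re,
    smul_eq_mul] at hHJB
  rw [tau_add, Complex.add_re, re_tau_mul_deriv_eq hdvg hLdag hA hρ.1 hce]
  linarith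

lemma ofReal_re_tau_sub_le_action
    (hdvg : ∀ W B, gns (dvg W) B = -∑ j, gns (W j) (Vf j * B - B * Vf j))
    (hLdag : ∀ ρ B, gns (Ldag ρ) B = gns ρ (genL Vf ω B))
    {ε : ℝ} {ρ₀ ρ₁ : Matrix N N ℂ} {A A' ρ : ℝ → Matrix N N ℂ} {Vc : ℝ → J → Matrix N N ℂ}
    (hA : IsHJB Vf ω ε A A') (hce : IsCE dvg Ldag ε ρ₀ ρ₁ ρ Vc) :
    ENNReal.ofReal (tau (A 1 * ρ₁ - A 0 * ρ₀)).re ≤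
      (∫⁻ t in Set.Icc (0:ℝ) 1, invQuadH (opOmega ω (ρ t)) (Vc t)) / 2 := by
  obtain ⟨rfl, rfl, hρ, -, ρ', hρderiv, hρ'cont, hceq⟩ := hce
  obtain ⟨hAherm, hAderiv, hA'cont, hHJB⟩ := hA
  have hcont : ∀ M : ℝ → Matrix N N ℂ, (∀ i k, ContinuousOn (fun t => M t i k) (Set.Icc 0 1)) →
      ContinuousOn M (Set.Icc 0 1) :=
    fun M hM => continuousOn_pi.2 fun i => continuousOn_pi.2 (hM i)
  have hAcont := hcont A fun i k t ht => (hAderiv t ht i k).continuousAt.continuousWithinAt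
  have hρcont := hcont ρ fun i k t ht => (hρderiv t ht i k).continuousAt.continuousWithinAt
  rw [div_eq_mul_inv, ← lintegral_mul_const' _ _ (by simp), tau_sub, Complex.sub_re]
  refine ofReal_sub_le_setLIntegral_of_hasDerivAt zero_le_one
    (fun t ht => hasDerivAt_re_tau_mul (hAderiv t ht) (hρderiv t ht))
    (Complex.continuous_re.comp_continuousOn <| continuous_tau.comp_continuousOn <|
      ((hcont A' hA'cont).mul hρcont).add (hAcont.mul (hcont ρ' hρ'cont)))
    fun t ht => ?_
  rw [← div_eq_mul_inv]
  exact ofReal_re_tau_deriv_le hdvg hLdag (hAherm t ht) (hρ t ht).1 (hceq t ht)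
    (hHJB t ht (ρ t) (hρ t ht).1.posSemidef (hρ t ht).2)

end Duality

theorem hjb_le_action_general
    {N : Type*} [Fintype N] [DecidableEq N] {J : Type*} [Fintype J]
    (ε : ℝ)
    (Vf : J → Matrix N N ℂ) (ω : J → ℝ)
    (dvg : (J → Matrix N N ℂ) → Matrix N N ℂ)
    (hdvg : ∀ (W : J → Matrix N N ℂ) (B : Matrix N N ℂ),
      gns (dvg W) B = -∑ j, gns (W j) (Vf j * B - B * Vf j))
    (Ldag : Matrix N N ℂ → Matrix N N ℂ)
    (hLdag : ∀ ρ B : Matrix N N ℂ, gns (Ldag ρ) B = gns ρ (genL Vf ω B))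
    (ρ₀ ρ₁ : Matrix N N ℂ) :
    (∀ A A' : ℝ → Matrix N N ℂ, IsHJB Vf ω ε A A' →
      ∀ (ρ : ℝ → Matrix N N ℂ) (Vc : ℝ → J → Matrix N N ℂ),
        IsCE dvg Ldag ε ρ₀ ρ₁ ρ Vc →
          ENNReal.ofReal (tau (A 1 * ρ₁ - A 0 * ρ₀)).re ≤
            (∫⁻ t in Set.Icc (0:ℝ) 1, invQuadH (opOmega ω (ρ t)) (Vc t)) / 2) ∧
    (⨆ (A : ℝ → Matrix N N ℂ) (A' : ℝ → Matrix N N ℂ) (_ : IsHJB Vf ω ε A A'),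
        ENNReal.ofReal (tau (A 1 * ρ₁ - A 0 * ρ₀)).re) ≤
      Wsq ω dvg Ldag ε ρ₀ ρ₁ / 2 := by
  refine ⟨fun A A' hA ρ Vc hce => ofReal_re_tau_sub_le_action hdvg hLdag hA hce, ?_⟩
  refine iSup_le fun A => iSup_le fun A' => iSup_le fun hA => ?_
  rw [Wsq, ENNReal.le_div_iff_mul_le (by simp) (by simp)]
  refine le_iInf fun ρ => le_iInf fun Vc => le_iInf fun hce => ?_
  rw [← ENNReal.le_div_iff_mul_le (by simp) (by simp)]
  exact ofReal_re_tau_sub_le_action hdvg hLdag hA hce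

/-- **Easy inequality in the duality formula.**  For every HJB`_ε` subsolution `A` and every
`(ρ, V) ∈ CE_ε(ρ₀,ρ₁)` one has `τ(A(1)ρ₁ - A(0)ρ₀) ≤ ½ ∫₀¹ ⟨V(t), [ρ(t)]_ω⁻¹ V(t)⟩ dt`;
consequently `sup_{A ∈ HJB_ε} τ(A(1)ρ₁ - A(0)ρ₀) ≤ ½ W_ε²(ρ₀,ρ₁)`. -/
theorem hjb_le_action
    {N : Type*} [Fintype N] [DecidableEq N] {J : Type*} [Fintype J]
    (ε : ℝ) (hε : 0 ≤ ε)
    (st : J → J) (Vf : J → Matrix N N ℂ) (ω : J → ℝ)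
    (hON : ∀ j k, tau ((Vf j)ᴴ * Vf k) = if j = k then 1 else 0)
    (htr : ∀ j, tau (Vf j) = 0)
    (hstinv : ∀ j, st (st j) = j)
    (hVst : ∀ j, Vf (st j) = (Vf j)ᴴ)
    (hωst : ∀ j, ω (st j) = -ω j)
    (σ : Matrix N N ℂ) (hσ : σ.PosDef) (hσtr : tau σ = 1)
    (hDBC : ∀ j, σ * Vf j = Real.exp (-ω j) • (Vf j * σ))
    (dvg : (J → Matrix N N ℂ) → Matrix N N ℂ)
    (hdvg : ∀ (W : J → Matrix N N ℂ) (B : Matrix N N ℂ),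
      gns (dvg W) B = -∑ j, gns (W j) (Vf j * B - B * Vf j))
    (Ldag : Matrix N N ℂ → Matrix N N ℂ)
    (hLdag : ∀ ρ B : Matrix N N ℂ, gns (Ldag ρ) B = gns ρ (genL Vf ω B))
    (ρ₀ ρ₁ : Matrix N N ℂ)
    (h₀ : ρ₀.PosDef) (h₀tr : tau ρ₀ = 1) (h₁ : ρ₁.PosDef) (h₁tr : tau ρ₁ = 1) :
    (∀ A A' : ℝ → Matrix N N ℂ, IsHJB Vf ω ε A A' →
      ∀ (ρ : ℝ → Matrix N N ℂ) (Vc : ℝ → J → Matrix N N ℂ),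
        IsCE dvg Ldag ε ρ₀ ρ₁ ρ Vc →
          ENNReal.ofReal (tau (A 1 * ρ₁ - A 0 * ρ₀)).re ≤
            (∫⁻ t in Set.Icc (0:ℝ) 1, invQuadH (opOmega ω (ρ t)) (Vc t)) / 2) ∧
    (⨆ (A : ℝ → Matrix N N ℂ) (A' : ℝ → Matrix N N ℂ) (_ : IsHJB Vf ω ε A A'),
        ENNReal.ofReal (tau (A 1 * ρ₁ - A 0 * ρ₀)).re) ≤
      Wsq ω dvg Ldag ε ρ₀ ρ₁ / 2 :=
  hjb_le_action_general ε Vf ω dvg hdvg Ldag hLdag ρ₀ ρ₁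
end

section
/- Let K_n (n ∈ ℕ) be positive definite (invertible positive semidefinite) operators on a finite-dimensional complex inner product space that converge monotonically decreasing (K_{n+1} ≤ K_n in the Loewner order) to a positive semidefinite operator K. Then for every vector V the sequence ⟨V, K_n⁻¹V⟩ is monotonically increasing and converges to the extended value ⟨V, K⁻¹V⟩ in [0,∞]. -/
open scoped ENNReal InnerProductSpace Classical

/-- Extended value `⟨V, K⁻¹ V⟩ ∈ [0,∞]` for a positive semidefinite operator `K`:
equals `⟨W, K W⟩` if `V = K W` with `W ⊥ ker K`, and `+∞` if `V ∉ ran K`. -/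
noncomputable def invQuad {E : Type*} [NormedAddCommGroup E] [InnerProductSpace ℂ E]
    (K : E →ₗ[ℂ] E) (V : E) : ℝ≥0∞ :=
  if h : ∃ W, K W = V ∧ ∀ U, K U = 0 → ⟪W, U⟫_ℂ = 0
  then ENNReal.ofReal (⟪h.choose, K h.choose⟫_ℂ).re
  else ⊤

/-!
For positive semidefinite `K`, the extended value has the variational description
`⟨V, K⁻¹V⟩ = sup_x (2 Re⟨x, V⟩ - ⟨x, K x⟩)`: the supremum is attained at `x = W` when `V = K W`,
and when `V ∉ ran K = (ker K)ᗮ` some `u ∈ ker K` has `⟨u, V⟩ ≠ 0`, so the expression is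
unbounded along multiples of `u`. Each term of the supremum increases as `K` decreases, and
exchanging the two suprema (over `x` and over `n`) gives monotone convergence.
-/

open Filter Topology

section

variable {E : Type*} [NormedAddCommGroup E] [InnerProductSpace ℂ E]

noncomputable def invQuadSup (K : E →ₗ[ℂ] E) (V : E) : ℝ≥0∞ :=
  ⨆ x : E, ENNReal.ofReal (2 * (⟪x, V⟫_ℂ).re - (⟪x, K x⟫_ℂ).re)

theorem LinearMap.IsPositive.two_mul_re_inner_sub_le {K : E →ₗ[ℂ] E} (hK : K.IsPositive)
    (W x : E) : 2 * (⟪x, K W⟫_ℂ).re - (⟪x, K x⟫_ℂ).re ≤ (⟪W, K W⟫_ℂ).re := by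
  have hnonneg : 0 ≤ (⟪W - x, K (W - x)⟫_ℂ).re := hK.re_inner_nonneg_right _
  have hexpand : ⟪W - x, K (W - x)⟫_ℂ = ⟪W, K W⟫_ℂ - ⟪K W, x⟫_ℂ - ⟪x, K W⟫_ℂ + ⟪x, K x⟫_ℂ := by
    rw [map_sub, inner_sub_left, inner_sub_right, inner_sub_right, ← hK.isSymmetric W x]
    ring
  have hsymm : (⟪K W, x⟫_ℂ).re = (⟪x, K W⟫_ℂ).re := by
    rw [← inner_conj_symm]; exact Complex.conj_re _
  rw [hexpand, Complex.add_re, Complex.sub_re, Complex.sub_re] at hnonneg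
  linarith

theorem invQuadSup_eq_of_apply_eq {K : E →ₗ[ℂ] E} (hK : K.IsPositive) {W V : E}
    (hW : K W = V) : invQuadSup K V = ENNReal.ofReal ((⟪W, K W⟫_ℂ).re) := by
  subst hW
  refine le_antisymm (iSup_le fun x => ENNReal.ofReal_le_ofReal ?_) (le_iSup_of_le W ?_)
  · exact hK.two_mul_re_inner_sub_le W x
  · exact ENNReal.ofReal_le_ofReal (by linarith)

theorem invQuadSup_eq_top_of_apply_eq_zero {K : E →ₗ[ℂ] E} {u V : E} (hu : K u = 0)
    (huV : ⟪u, V⟫_ℂ ≠ 0) : invQuadSup K V = ⊤ := by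
  refine ENNReal.eq_top_of_forall_nnreal_le fun r => le_iSup_of_le
    (((r / 2 : ℝ) / (starRingEnd ℂ) ⟪u, V⟫_ℂ : ℂ) • u) (le_of_eq ?_)
  have hV : ⟪((r / 2 : ℝ) / (starRingEnd ℂ) ⟪u, V⟫_ℂ : ℂ) • u, V⟫_ℂ = (r / 2 : ℝ) := by
    rw [inner_smul_left, map_div₀, Complex.conj_conj, Complex.conj_ofReal, div_mul_cancel₀ _ huV]
  rw [hV, map_smul, hu, smul_zero, inner_zero_right, Complex.ofReal_re, Complex.zero_re,
    show 2 * ((r : ℝ) / 2) - 0 = r by ring, ENNReal.ofReal_coe_nnreal]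

theorem invQuadSup_anti {K K' : E →ₗ[ℂ] E} (h : ∀ x, (⟪x, K' x⟫_ℂ).re ≤ (⟪x, K x⟫_ℂ).re) (V : E) :
    invQuadSup K V ≤ invQuadSup K' V :=
  iSup_mono fun x => ENNReal.ofReal_le_ofReal (by linarith [h x])

theorem tendsto_invQuadSup {ι : Type*} [SemilatticeSup ι] [Nonempty ι] {K : ι → E →ₗ[ℂ] E}
    {L : E →ₗ[ℂ] E} (hanti : ∀ x, Antitone fun i => (⟪x, K i x⟫_ℂ).re)
    (hlim : ∀ x, Tendsto (fun i => (⟪x, K i x⟫_ℂ).re) atTop (𝓝 ((⟪x, L x⟫_ℂ).re))) (V : E) :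
    Tendsto (fun i => invQuadSup (K i) V) atTop (𝓝 (invQuadSup L V)) := by
  have hmono : Monotone fun i => invQuadSup (K i) V :=
    fun i j hij => invQuadSup_anti (fun x => hanti x hij) V
  suffices h : ⨆ i, invQuadSup (K i) V = invQuadSup L V from h ▸ tendsto_atTop_iSup hmono
  simp only [invQuadSup]
  rw [iSup_comm]
  refine iSup_congr fun x => tendsto_nhds_unique (tendsto_atTop_iSup fun i j hij => ?_) ?_
  · exact ENNReal.ofReal_le_ofReal (by linarith [hanti x hij])
  · exact ENNReal.tendsto_ofReal (tendsto_const_nhds.sub (hlim x))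

variable [FiniteDimensional ℂ E]

theorem LinearMap.IsSymmetric.range_eq_orthogonal_ker {K : E →ₗ[ℂ] E} (hK : K.IsSymmetric) :
    LinearMap.range K = (LinearMap.ker K)ᗮ := by
  rw [← hK.orthogonal_range, Submodule.orthogonal_orthogonal]

theorem exists_apply_eq_mem_orthogonal_ker {K : E →ₗ[ℂ] E} {V : E}
    (hV : V ∈ LinearMap.range K) : ∃ W ∈ (LinearMap.ker K)ᗮ, K W = V := by
  obtain ⟨W₀, rfl⟩ := hV
  obtain ⟨y, hy, W, hW, rfl⟩ := (LinearMap.ker K).exists_add_mem_mem_orthogonal W₀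
  exact ⟨W, hW, by rw [map_add, LinearMap.mem_ker.mp hy, zero_add]⟩

theorem invQuad_eq_invQuadSup {K : E →ₗ[ℂ] E} (hK : K.IsPositive) (V : E) :
    invQuad K V = invQuadSup K V := by
  by_cases h : ∃ W, K W = V ∧ ∀ U, K U = 0 → ⟪W, U⟫_ℂ = 0
  · rw [invQuad, dif_pos h, invQuadSup_eq_of_apply_eq hK h.choose_spec.1]
  rw [invQuad, dif_neg h]
  have hV : V ∉ (LinearMap.ker K)ᗮ := by
    rw [← hK.isSymmetric.range_eq_orthogonal_ker]
    intro hV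
    obtain ⟨W, hW, hWV⟩ := exists_apply_eq_mem_orthogonal_ker hV
    exact h ⟨W, hWV, fun U hU => (Submodule.mem_orthogonal' _ _).mp hW U hU⟩
  obtain ⟨u, hu, huV⟩ : ∃ u ∈ LinearMap.ker K, ⟪u, V⟫_ℂ ≠ 0 := by
    simpa [Submodule.mem_orthogonal] using hV
  exact (invQuadSup_eq_top_of_apply_eq_zero hu huV).symm

end

theorem monotone_convergence_invQuad_general
    {E : Type*} [NormedAddCommGroup E] [InnerProductSpace ℂ E] [FiniteDimensional ℂ E]
    (K : ℕ → E →ₗ[ℂ] E) (Klim : E →ₗ[ℂ] E)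
    (hsym : ∀ n, ∀ x y : E, ⟪K n x, y⟫_ℂ = ⟪x, K n y⟫_ℂ)
    (hdec : ∀ n, ∀ x : E, 0 ≤ (⟪x, K n x - K (n+1) x⟫_ℂ).re)
    (hlimsym : ∀ x y : E, ⟪Klim x, y⟫_ℂ = ⟪x, Klim y⟫_ℂ)
    (hlimpos : ∀ x : E, 0 ≤ (⟪x, Klim x⟫_ℂ).re)
    (htends : ∀ x : E, Filter.Tendsto (fun n => K n x) Filter.atTop (nhds (Klim x)))
    (V : E) :
    Monotone (fun n => invQuad (K n) V) ∧
      Filter.Tendsto (fun n => invQuad (K n) V) Filter.atTop (nhds (invQuad Klim V)) := by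
  have hanti : ∀ x, Antitone fun n => (⟪x, K n x⟫_ℂ).re := fun x =>
    antitone_nat_of_succ_le fun n => by
      have h := hdec n x
      rw [inner_sub_right, Complex.sub_re] at h
      linarith
  have hlim : ∀ x, Tendsto (fun n => (⟪x, K n x⟫_ℂ).re) atTop (𝓝 (⟪x, Klim x⟫_ℂ).re) := fun x =>
    (Complex.continuous_re.tendsto _).comp (tendsto_const_nhds.inner (htends x))
  have hKlim : Klim.IsPositive := ⟨hlimsym, fun x => by rw [hlimsym]; exact hlimpos x⟩
  -- `K n ≥ Klim ≥ 0`, since the quadratic forms decrease to that of `Klim`.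
  have hK : ∀ n, (K n).IsPositive := fun n => ⟨hsym n, fun x => by
    rw [hsym n]; exact (hlimpos x).trans ((hanti x).le_of_tendsto (hlim x) n)⟩
  simp only [invQuad_eq_invQuadSup (hK _), invQuad_eq_invQuadSup hKlim]
  exact ⟨fun m n hmn => invQuadSup_anti (fun x => hanti x hmn) V, tendsto_invQuadSup hanti hlim V⟩

/-- **Monotone convergence of inverse quadratic forms** (Lemma 1.1).  If positive definite
operators `K n` decrease monotonically (in the Loewner order) to a positive semidefinite
operator `K`, then `⟨V, (K n)⁻¹ V⟩` increases monotonically to `⟨V, K⁻¹ V⟩` in `[0,∞]`. -/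
theorem monotone_convergence_invQuad
    {E : Type*} [NormedAddCommGroup E] [InnerProductSpace ℂ E] [FiniteDimensional ℂ E]
    (K : ℕ → E →ₗ[ℂ] E) (Klim : E →ₗ[ℂ] E)
    (hsym : ∀ n, ∀ x y : E, ⟪K n x, y⟫_ℂ = ⟪x, K n y⟫_ℂ)
    (hpos : ∀ n, ∀ x : E, x ≠ 0 → 0 < (⟪x, K n x⟫_ℂ).re)
    (hdec : ∀ n, ∀ x : E, 0 ≤ (⟪x, K n x - K (n+1) x⟫_ℂ).re)
    (hlimsym : ∀ x y : E, ⟪Klim x, y⟫_ℂ = ⟪x, Klim y⟫_ℂ)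
    (hlimpos : ∀ x : E, 0 ≤ (⟪x, Klim x⟫_ℂ).re)
    (htends : ∀ x : E, Filter.Tendsto (fun n => K n x) Filter.atTop (nhds (Klim x)))
    (V : E) :
    Monotone (fun n => invQuad (K n) V) ∧
      Filter.Tendsto (fun n => invQuad (K n) V) Filter.atTop (nhds (invQuad Klim V)) :=
  monotone_convergence_invQuad_general K Klim hsym hdec hlimsym hlimpos htends V
end

section
/- Let K be a positive semidefinite operator on a finite-dimensional complex inner product space and V a vector. Then the extended value satisfies ⟨V, K⁻¹V⟩ = sup_{δ > 0} ⟨V, (K + δ·I)⁻¹V⟩, as an identity in [0,∞]. -/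
open scoped ENNReal InnerProductSpace Classical

/-! Both sides are evaluated through the variational formula
`⟨V, K⁻¹V⟩ = sup_x (2 Re⟨x, V⟩ - ⟨x, K x⟩)`, valid in `[0, ∞]` for every positive `K`: if `V = K W`
the bracket equals `⟨W, K W⟩ - ⟨x - W, K (x - W)⟩`, and otherwise some `U ∈ ker K` has
`⟨U, V⟩ ≠ 0` (the range of `K` is `(ker K)ᗮ`), so the bracket is unbounded along multiples of `U`.
Replacing `K` by `K + δ` subtracts `δ‖x‖²` from the bracket, so the supremum over `δ > 0` can be
taken first, pointwise in `x`. -/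

namespace LinearMap.IsSymmetric

variable {𝕜 E : Type*} [RCLike 𝕜] [NormedAddCommGroup E] [InnerProductSpace 𝕜 E]
  {T : E →ₗ[𝕜] E}

open RCLike in
theorem re_inner_sub_apply_sub (hT : T.IsSymmetric) (x y : E) :
    re ⟪x - y, T (x - y)⟫_𝕜 = re ⟪x, T x⟫_𝕜 - 2 * re ⟪x, T y⟫_𝕜 + re ⟪y, T y⟫_𝕜 := by
  have hyx : re ⟪y, T x⟫_𝕜 = re ⟪x, T y⟫_𝕜 := by
    rw [← hT, inner_re_symm]
  simp only [map_sub, inner_sub_left, inner_sub_right, hyx]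
  ring

theorem exists_mem_orthogonal_ker_apply_eq [FiniteDimensional 𝕜 E] (hT : T.IsSymmetric)
    {v : E} (hv : v ∈ (ker T)ᗮ) : ∃ w ∈ (ker T)ᗮ, T w = v := by
  rw [← hT.orthogonal_range, Submodule.orthogonal_orthogonal] at hv
  obtain ⟨w, rfl⟩ := hv
  refine ⟨w - (ker T).starProjection w, Submodule.sub_starProjection_mem_orthogonal w, ?_⟩
  rw [map_sub, mem_ker.mp (Submodule.starProjection_apply_mem _ w), sub_zero]

end LinearMap.IsSymmetric

theorem ENNReal.iSup_pos_ofReal_sub_mul (c : ℝ) {t : ℝ} (ht : 0 ≤ t) :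
    ⨆ (δ : ℝ) (_ : 0 < δ), ENNReal.ofReal (c - δ * t) = ENNReal.ofReal c := by
  refine le_antisymm (iSup₂_le fun δ hδ => ENNReal.ofReal_le_ofReal ?_) ?_
  · nlinarith
  · have hcont : Continuous fun δ : ℝ => ENNReal.ofReal (c - δ * t) :=
      ENNReal.continuous_ofReal.comp (by fun_prop)
    have hlim := (hcont.tendsto 0).mono_left (nhdsWithin_le_nhds (s := Set.Ioi 0))
    rw [zero_mul, sub_zero] at hlim
    exact le_of_tendsto hlim (eventually_nhdsWithin_of_forall fun δ hδ =>
      le_iSup₂ (f := fun δ (_ : 0 < δ) => ENNReal.ofReal (c - δ * t)) δ hδ)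

section Variational

variable {E : Type*} [NormedAddCommGroup E] [InnerProductSpace ℂ E] {K : E →ₗ[ℂ] E}

theorem iSup_ofReal_two_re_inner_sub_of_apply_eq (hK : K.IsPositive) {V W : E} (hW : K W = V) :
    ⨆ x, ENNReal.ofReal (2 * (⟪x, V⟫_ℂ).re - (⟪x, K x⟫_ℂ).re) =
      ENNReal.ofReal (⟪W, K W⟫_ℂ).re := by
  subst hW
  refine le_antisymm (iSup_le fun x => ENNReal.ofReal_le_ofReal ?_) (le_iSup_of_le W ?_)
  · have hexpand := hK.isSymmetric.re_inner_sub_apply_sub x W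
    have hnonneg := hK.re_inner_nonneg_right (x - W)
    simp only [RCLike.re_to_complex] at hexpand hnonneg
    linarith
  · rw [two_mul, add_sub_cancel_right]

theorem iSup_ofReal_two_re_inner_sub_eq_top {V U : E} (hU : K U = 0) (hUV : ⟪U, V⟫_ℂ ≠ 0) :
    ⨆ x, ENNReal.ofReal (2 * (⟪x, V⟫_ℂ).re - (⟪x, K x⟫_ℂ).re) = ⊤ := by
  refine ENNReal.eq_top_of_forall_nnreal_le fun r => ?_
  set s : ℝ := r / (2 * ‖⟪U, V⟫_ℂ‖ ^ 2)
  have hinner : ⟪((s : ℂ) * ⟪U, V⟫_ℂ) • U, V⟫_ℂ = ((s * ‖⟪U, V⟫_ℂ‖ ^ 2 : ℝ) : ℂ) := by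
    rw [inner_smul_left, map_mul, Complex.conj_ofReal, mul_assoc, Complex.conj_mul']
    push_cast
    ring
  have hr : 2 * (s * ‖⟪U, V⟫_ℂ‖ ^ 2) = r := by
    have : 0 < ‖⟪U, V⟫_ℂ‖ := norm_pos_iff.mpr hUV
    simp only [s]
    field_simp
  refine le_iSup_of_le (((s : ℂ) * ⟪U, V⟫_ℂ) • U) ?_
  rw [hinner, map_smul, hU, smul_zero, inner_zero_right, Complex.ofReal_re, Complex.zero_re,
    sub_zero, hr, ENNReal.ofReal_coe_nnreal]

theorem invQuad_eq_iSup_ofReal [FiniteDimensional ℂ E] (hK : K.IsPositive) (V : E) :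
    invQuad K V = ⨆ x, ENNReal.ofReal (2 * (⟪x, V⟫_ℂ).re - (⟪x, K x⟫_ℂ).re) := by
  rw [invQuad]
  split_ifs with h
  · exact (iSup_ofReal_two_re_inner_sub_of_apply_eq hK h.choose_spec.1).symm
  · obtain ⟨U, hU, hUV⟩ : ∃ U, K U = 0 ∧ ⟪U, V⟫_ℂ ≠ 0 := by
      by_contra! hV
      obtain ⟨W, hW_orth, hW⟩ :=
        hK.isSymmetric.exists_mem_orthogonal_ker_apply_eq ((Submodule.mem_orthogonal _ _).mpr hV)
      exact h ⟨W, hW, (Submodule.mem_orthogonal' _ _).mp hW_orth⟩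
    exact (iSup_ofReal_two_re_inner_sub_eq_top hU hUV).symm

theorem re_inner_add_smul_id_apply (δ : ℝ) (x : E) :
    (⟪x, (K + (δ : ℂ) • (LinearMap.id : E →ₗ[ℂ] E)) x⟫_ℂ).re =
      (⟪x, K x⟫_ℂ).re + δ * ‖x‖ ^ 2 := by
  simp [← Complex.ofReal_pow]

theorem LinearMap.IsPositive.add_smul_id (hK : K.IsPositive) {δ : ℝ} (hδ : 0 ≤ δ) :
    (K + (δ : ℂ) • (LinearMap.id : E →ₗ[ℂ] E)).IsPositive :=
  hK.add (LinearMap.isPositive_id.smul_of_nonneg (Complex.zero_le_real.mpr hδ))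

end Variational

/-- For a positive semidefinite operator `K` on a finite-dimensional complex inner product
space and a vector `V`, the extended value satisfies
`⟨V, K⁻¹ V⟩ = sup_{δ > 0} ⟨V, (K + δ·I)⁻¹ V⟩` in `[0,∞]`. -/
theorem invQuad_eq_iSup_delta
    {E : Type*} [NormedAddCommGroup E] [InnerProductSpace ℂ E] [FiniteDimensional ℂ E]
    (K : E →ₗ[ℂ] E)
    (hsym : ∀ x y : E, ⟪K x, y⟫_ℂ = ⟪x, K y⟫_ℂ)
    (hpos : ∀ x : E, 0 ≤ (⟪x, K x⟫_ℂ).re)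
    (V : E) :
    invQuad K V =
      ⨆ (δ : ℝ) (_ : 0 < δ), invQuad (K + (δ : ℂ) • (LinearMap.id : E →ₗ[ℂ] E)) V := by
  have hK : K.IsPositive := ⟨hsym, fun x => by rw [hsym]; exact hpos x⟩
  calc invQuad K V = ⨆ x, ENNReal.ofReal (2 * (⟪x, V⟫_ℂ).re - (⟪x, K x⟫_ℂ).re) :=
        invQuad_eq_iSup_ofReal hK V
    _ = ⨆ x, ⨆ (δ : ℝ) (_ : 0 < δ),
          ENNReal.ofReal (2 * (⟪x, V⟫_ℂ).re - (⟪x, K x⟫_ℂ).re - δ * ‖x‖ ^ 2) :=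
        iSup_congr fun x => (ENNReal.iSup_pos_ofReal_sub_mul _ (sq_nonneg ‖x‖)).symm
    _ = ⨆ (δ : ℝ) (_ : 0 < δ), ⨆ x,
          ENNReal.ofReal (2 * (⟪x, V⟫_ℂ).re - (⟪x, K x⟫_ℂ).re - δ * ‖x‖ ^ 2) := by
        rw [iSup_comm]
        exact iSup_congr fun δ => iSup_comm
    _ = _ := iSup_congr fun δ => iSup_congr fun hδ => by
        simp only [invQuad_eq_iSup_ofReal (hK.add_smul_id hδ.le), re_inner_add_smul_id_apply,
          sub_add_eq_sub_sub]
end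

section
/- For every positive semidefinite X ∈ M_n(ℂ) and α ∈ ℝ, the operator [X]_α is a positive self-adjoint operator on the Hilbert space (M_n(ℂ), ⟨·,·⟩): ⟨A, [X]_α A⟩ ≥ 0 for all A ∈ M_n(ℂ) and ⟨A, [X]_α B⟩ = ⟨[X]_α A, B⟩ for all A, B ∈ M_n(ℂ). Moreover, if X is positive definite, then [X]_α is invertible (positive definite). -/
/-!
Diagonalise `X = U diag(λ) U*`. Then `X^s A X^{1-s} = U (P_s ⊙ U*AU) U*` with
`(P_s)_{ij} = λ_i^s λ_j^{1-s}`, and integrating entrywise shows that, after the unitary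
change of basis `A ↦ U*AU` (which preserves `⟨·,·⟩`), `[X]_α` is the Schur multiplier by
the matrix `K_{ij} = ∫₀¹ e^{α(s-1/2)} λ_i^s λ_j^{1-s} ds`. Its entries are real and
nonnegative, and positive when every `λ_i > 0`. So `⟨A, K ⊙ A⟩ = n⁻¹ Σ K_{ij} |A_{ij}|²` is
nonnegative (positive for `A ≠ 0`), `K ⊙ ·` is self-adjoint because `K` is real, and it is
invertible when no entry of `K` vanishes.
-/

open MeasureTheory Matrix
open scoped ENNReal Classical ComplexOrder

/-- `s ↦ 0 ^ s` jumps at `s = 0`, so integrability comes from the weighted AM–GM bound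
`|a ^ s * b ^ (1 - s)| ≤ s |a| + (1 - s) |b|` rather than from continuity. -/
theorem intervalIntegrable_rpow_mul_rpow (a b : ℝ) :
    IntervalIntegrable (fun s : ℝ => a ^ s * b ^ (1 - s)) volume 0 1 := by
  refine IntervalIntegrable.mono_fun' (g := fun s => s * |a| + (1 - s) * |b|)
    ((by fun_prop : Continuous _).intervalIntegrable 0 1) (by fun_prop) ?_
  rw [Filter.EventuallyLE, ae_restrict_iff' measurableSet_uIoc]
  refine Filter.Eventually.of_forall fun s hs => ?_
  rw [Set.uIoc_of_le zero_le_one] at hs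
  calc ‖a ^ s * b ^ (1 - s)‖ ≤ |a| ^ s * |b| ^ (1 - s) := by
        rw [norm_mul]
        exact mul_le_mul (Real.abs_rpow_le_abs_rpow _ _) (Real.abs_rpow_le_abs_rpow _ _)
          (norm_nonneg _) (Real.rpow_nonneg (abs_nonneg _) _)
    _ ≤ s * |a| + (1 - s) * |b| :=
        Real.geom_mean_le_arith_mean2_weighted hs.1.le (by linarith [hs.2]) (abs_nonneg _)
          (abs_nonneg _) (by ring)

noncomputable def sandwichKernel (α a b : ℝ) : ℝ :=
  ∫ s in (0:ℝ)..1, Real.exp (α * (s - 1/2)) * (a ^ s * b ^ (1 - s))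

theorem intervalIntegrable_exp_mul_rpow_mul_rpow (α a b : ℝ) :
    IntervalIntegrable (fun s : ℝ => Real.exp (α * (s - 1/2)) * (a ^ s * b ^ (1 - s)))
      volume 0 1 :=
  (intervalIntegrable_rpow_mul_rpow a b).continuousOn_mul (by fun_prop)

theorem sandwichKernel_nonneg (α : ℝ) {a b : ℝ} (ha : 0 ≤ a) (hb : 0 ≤ b) :
    0 ≤ sandwichKernel α a b :=
  intervalIntegral.integral_nonneg zero_le_one fun _ _ => by positivity

theorem sandwichKernel_pos (α : ℝ) {a b : ℝ} (ha : 0 < a) (hb : 0 < b) :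
    0 < sandwichKernel α a b :=
  intervalIntegral.intervalIntegral_pos_of_pos (intervalIntegrable_exp_mul_rpow_mul_rpow α a b)
    (fun _ => by positivity) zero_lt_one

theorem Matrix.hadamard_bijective {m n α : Type*} [GroupWithZero α] {K : Matrix m n α}
    (hK : ∀ i j, K i j ≠ 0) : Function.Bijective (K ⊙ ·) :=
  Function.bijective_iff_has_inverse.mpr ⟨(K.map (·⁻¹) ⊙ ·),
    fun M => by ext i j; simp [inv_mul_cancel_left₀ (hK i j)],
    fun M => by ext i j; simp [mul_inv_cancel_left₀ (hK i j)]⟩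

theorem Matrix.intervalIntegral_mul_hadamard_mul_apply {l m n o : Type*}
    [Fintype m] [Fintype n] {a b : ℝ} {w : ℝ → Matrix m n ℂ}
    (hw : ∀ p q, IntervalIntegrable (fun s => w s p q) volume a b)
    (U : Matrix l m ℂ) (M : Matrix m n ℂ) (V : Matrix n o ℂ) (i : l) (k : o) :
    ∫ s in a..b, (U * (w s ⊙ M) * V) i k =
      (U * (of (fun p q => ∫ s in a..b, w s p q) ⊙ M) * V) i k := by
  have hterm : ∀ q p, IntervalIntegrable (fun s => U i p * (w s ⊙ M) p q * V q k) volume a b :=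
    fun q p => by
      simpa [mul_assoc, mul_left_comm, mul_comm] using (hw p q).const_mul (U i p * M p q * V q k)
  simp only [mul_apply, Finset.sum_mul]
  rw [intervalIntegral.integral_finsetSum fun q _ => by
    simpa only [Finset.sum_fn] using IntervalIntegrable.sum _ fun p _ => hterm q p]
  refine Finset.sum_congr rfl fun q _ => ?_
  rw [intervalIntegral.integral_finsetSum fun p _ => hterm q p]
  refine Finset.sum_congr rfl fun p _ => ?_
  simp only [hadamard_apply, of_apply]
  rw [← intervalIntegral.integral_mul_const, ← intervalIntegral.integral_const_mul,
    ← intervalIntegral.integral_mul_const]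

section Gns

variable {N : Type*} [Fintype N]

theorem gns_eq_sum (A B : Matrix N N ℂ) :
    gns A B = (Fintype.card N : ℂ)⁻¹ * ∑ i, ∑ j, star (A i j) * B i j := by
  rw [gns, tau, trace, Finset.sum_comm, div_eq_inv_mul]
  simp [mul_apply]

theorem gns_hadamard_of_isSelfAdjoint {K : Matrix N N ℂ} (hK : ∀ i j, IsSelfAdjoint (K i j))
    (A B : Matrix N N ℂ) : gns A (K ⊙ B) = gns (K ⊙ A) B := by
  simp only [gns_eq_sum, hadamard_apply, star_mul', (hK _ _).star_eq]
  congr 1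
  refine Finset.sum_congr rfl fun i _ => Finset.sum_congr rfl fun j _ => by ring

theorem gns_hadamard_self_nonneg {K : Matrix N N ℂ} (hK : ∀ i j, 0 ≤ K i j)
    (A : Matrix N N ℂ) : 0 ≤ gns A (K ⊙ A) := by
  rw [gns_eq_sum]
  refine mul_nonneg (by positivity) (Finset.sum_nonneg fun i _ => Finset.sum_nonneg fun j _ => ?_)
  rw [hadamard_apply, mul_left_comm]
  exact mul_nonneg (hK i j) (star_mul_self_nonneg _)

theorem gns_hadamard_self_pos {K : Matrix N N ℂ} (hK : ∀ i j, 0 < K i j) {A : Matrix N N ℂ}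
    (hA : A ≠ 0) : 0 < gns A (K ⊙ A) := by
  obtain ⟨p, q, hpq⟩ : ∃ p q, A p q ≠ 0 := by
    by_contra! h
    exact hA (Matrix.ext h)
  have hterm : ∀ i j, 0 ≤ star (A i j) * (K ⊙ A) i j := fun i j => by
    rw [hadamard_apply, mul_left_comm]
    exact mul_nonneg (hK i j).le (star_mul_self_nonneg _)
  have : Nonempty N := ⟨p⟩
  rw [gns_eq_sum]
  refine mul_pos (by simp [Fintype.card_pos]) (Finset.sum_pos' (fun i _ => Finset.sum_nonneg
    fun j _ => hterm i j) ⟨p, Finset.mem_univ p, Finset.sum_pos' (fun j _ => hterm p j)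
      ⟨q, Finset.mem_univ q, ?_⟩⟩)
  rw [hadamard_apply, mul_left_comm]
  exact mul_pos (hK p q) (star_mul_self_pos (IsRegular.of_ne_zero hpq))

variable [DecidableEq N]

theorem tau_conjStarAlgAut (u : unitary (Matrix N N ℂ)) (M : Matrix N N ℂ) :
    tau (Unitary.conjStarAlgAut ℂ _ u M) = tau M := by
  rw [tau, tau, Unitary.conjStarAlgAut_apply, trace_mul_cycle, Unitary.coe_star_mul_self,
    one_mul]

theorem gns_conjStarAlgAut (u : unitary (Matrix N N ℂ)) (A B : Matrix N N ℂ) :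
    gns (Unitary.conjStarAlgAut ℂ _ u A) (Unitary.conjStarAlgAut ℂ _ u B) = gns A B := by
  rw [gns, gns, ← star_eq_conjTranspose, ← map_star, ← map_mul, tau_conjStarAlgAut,
    star_eq_conjTranspose]

theorem gns_conjStarAlgAut_right (u : unitary (Matrix N N ℂ)) (A M : Matrix N N ℂ) :
    gns A (Unitary.conjStarAlgAut ℂ _ u M) = gns ((Unitary.conjStarAlgAut ℂ _ u).symm A) M := by
  conv_lhs => rw [← (Unitary.conjStarAlgAut ℂ _ u).apply_symm_apply A]
  exact gns_conjStarAlgAut u _ _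

theorem gns_conjStarAlgAut_left (u : unitary (Matrix N N ℂ)) (M B : Matrix N N ℂ) :
    gns (Unitary.conjStarAlgAut ℂ _ u M) B = gns M ((Unitary.conjStarAlgAut ℂ _ u).symm B) := by
  conv_lhs => rw [← (Unitary.conjStarAlgAut ℂ _ u).apply_symm_apply B]
  exact gns_conjStarAlgAut u _ _

end Gns

section Sandwich

variable {N : Type*}

noncomputable def sandwichMultiplier (α : ℝ) (d : N → ℝ) : Matrix N N ℂ :=
  of fun i j => (sandwichKernel α (d i) (d j) : ℂ)

theorem sandwichMultiplier_nonneg (α : ℝ) {d : N → ℝ} (hd : ∀ i, 0 ≤ d i) (i j : N) :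
    0 ≤ sandwichMultiplier α d i j :=
  Complex.zero_le_real.mpr (sandwichKernel_nonneg α (hd i) (hd j))

theorem sandwichMultiplier_pos (α : ℝ) {d : N → ℝ} (hd : ∀ i, 0 < d i) (i j : N) :
    0 < sandwichMultiplier α d i j :=
  Complex.zero_lt_real.mpr (sandwichKernel_pos α (hd i) (hd j))

variable [Fintype N] [DecidableEq N] {X : Matrix N N ℂ}

theorem mpow_mul_mul_mpow (hX : X.IsHermitian) (A : Matrix N N ℂ) (s t : ℝ) :
    mpow X s * A * mpow X t = Unitary.conjStarAlgAut ℂ _ hX.eigenvectorUnitary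
      (of (fun i j => ((hX.eigenvalues i ^ s * hX.eigenvalues j ^ t : ℝ) : ℂ)) ⊙
        (Unitary.conjStarAlgAut ℂ _ hX.eigenvectorUnitary).symm A) := by
  have hdiag : ∀ M : Matrix N N ℂ,
      diagonal (fun i => ((hX.eigenvalues i ^ s : ℝ) : ℂ)) * M *
        diagonal (fun j => ((hX.eigenvalues j ^ t : ℝ) : ℂ)) =
      of (fun i j => ((hX.eigenvalues i ^ s * hX.eigenvalues j ^ t : ℝ) : ℂ)) ⊙ M := by
    intro M
    ext i j
    simp only [mul_diagonal, diagonal_mul, hadamard_apply, of_apply, Complex.ofReal_mul]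
    ring
  rw [Unitary.conjStarAlgAut_apply, Unitary.conjStarAlgAut_symm_apply, ← hdiag]
  simp only [mpow, dif_pos hX, Matrix.mul_assoc]

theorem sandwich_eq_conjStarAlgAut_hadamard (hX : X.IsHermitian) (α : ℝ) (A : Matrix N N ℂ) :
    sandwich X α A = Unitary.conjStarAlgAut ℂ _ hX.eigenvectorUnitary
      (sandwichMultiplier α hX.eigenvalues ⊙
        (Unitary.conjStarAlgAut ℂ _ hX.eigenvectorUnitary).symm A) := by
  set c := Unitary.conjStarAlgAut ℂ (Matrix N N ℂ) hX.eigenvectorUnitary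
  set U : Matrix N N ℂ := (hX.eigenvectorUnitary : Matrix N N ℂ)
  set w : ℝ → Matrix N N ℂ := fun s => of fun p q =>
    ((Real.exp (α * (s - 1/2)) * (hX.eigenvalues p ^ s * hX.eigenvalues q ^ (1 - s)) : ℝ) : ℂ)
  have hintegrand : ∀ s : ℝ, Real.exp (α * (s - 1/2)) • (mpow X s * A * mpow X (1 - s)) =
      U * (w s ⊙ c.symm A) * star U := fun s => by
    rw [mpow_mul_mul_mpow hX, Unitary.conjStarAlgAut_apply, ← Matrix.smul_mul,
      ← Matrix.mul_smul, ← smul_hadamard]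
    congr 3
    ext p q
    simp [w, Complex.real_smul]
  ext i k
  simp only [sandwich, of_apply, ← Matrix.smul_apply, hintegrand]
  rw [intervalIntegral_mul_hadamard_mul_apply]
  · simp only [w, of_apply, intervalIntegral.integral_ofReal]
    rfl
  · intro p q
    have h := intervalIntegrable_exp_mul_rpow_mul_rpow α (hX.eigenvalues p) (hX.eigenvalues q)
    exact ⟨Integrable.ofReal h.1, Integrable.ofReal h.2⟩

end Sandwich

/-- **Positivity and self-adjointness of `[X]_α`.**  For positive semidefinite `X`, the
operator `[X]_α` is positive and self-adjoint on the Hilbert space `(M_n(ℂ), ⟨·,·⟩)`;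
moreover if `X` is positive definite, then `[X]_α` is invertible (positive definite). -/
theorem sandwich_posSelfAdjoint {N : Type*} [Fintype N] [DecidableEq N]
    (X : Matrix N N ℂ) (hX : X.PosSemidef) (α : ℝ) :
    (∀ A : Matrix N N ℂ, 0 ≤ (gns A (sandwich X α A)).re ∧
      (gns A (sandwich X α A)).im = 0) ∧
    (∀ A B : Matrix N N ℂ, gns A (sandwich X α B) = gns (sandwich X α A) B) ∧
    (X.PosDef → Function.Bijective (fun A : Matrix N N ℂ => sandwich X α A) ∧
      ∀ A : Matrix N N ℂ, A ≠ 0 → 0 < (gns A (sandwich X α A)).re) := by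
  set c := Unitary.conjStarAlgAut ℂ (Matrix N N ℂ) hX.1.eigenvectorUnitary
  set K := sandwichMultiplier α hX.1.eigenvalues
  have hK : ∀ i j, 0 ≤ K i j := sandwichMultiplier_nonneg α hX.eigenvalues_nonneg
  have hS : ∀ A, sandwich X α A = c (K ⊙ c.symm A) :=
    sandwich_eq_conjStarAlgAut_hadamard hX.1 α
  have hinner : ∀ A B, gns A (sandwich X α B) = gns (c.symm A) (K ⊙ c.symm B) := fun A B => by
    rw [hS, gns_conjStarAlgAut_right]
  refine ⟨fun A => ?_, fun A B => ?_, fun hPD => ⟨?_, fun A hA => ?_⟩⟩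
  · obtain ⟨hre, him⟩ :=
      Complex.nonneg_iff.mp (hinner A A ▸ gns_hadamard_self_nonneg hK (c.symm A))
    exact ⟨hre, him.symm⟩
  · rw [hinner, gns_hadamard_of_isSelfAdjoint (fun i j => .of_nonneg (hK i j)), hS,
      gns_conjStarAlgAut_left]
  · have hK₀ : ∀ i j, K i j ≠ 0 := fun i j =>
      (sandwichMultiplier_pos α hPD.eigenvalues_pos i j).ne'
    rw [show (fun A => sandwich X α A) = c ∘ (K ⊙ ·) ∘ c.symm from funext hS]
    exact c.bijective.comp ((hadamard_bijective hK₀).comp c.symm.bijective)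
  · have hA' : c.symm A ≠ 0 := (map_ne_zero_iff _ c.symm.injective).mpr hA
    rw [hinner]
    exact (Complex.pos_iff.mp
      (gns_hadamard_self_pos (sandwichMultiplier_pos α hPD.eigenvalues_pos) hA')).1
end
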